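/- arXiv:2206.08873 — 2 statements merged into one kernel-verified Lean document; each statement's English description precedes it below -/
import Mathlib

section
/- Convergence rate of mirror descent under relative smoothness and relative strong convexity: suppose F is convex, L-smooth and l-strongly convex relative to φ on a set R (with 0 ≤ l ≤ L), the mirror descent iterates μ_{n+1} = argmin_{ν∈C}{d⁺F(μ_n)(ν−μ_n) + L·D_φ(ν|μ_n)} exist uniquely in R, and φ has first variations at each μ_n. Then for all n ≥ 1 and all ν ∈ dom(F) ∩ dom(φ) ∩ R: F(μ_n) − F(ν) ≤ l·D_φ(ν|μ_0) / ((1 + l/(L−l))^n − 1) ≤ (L/n)·D_φ(ν|μ_0). -/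
/-!
With `D(ν|μ)` the Bregman divergence of `φ`, the minimality of `μₙ₊₁` gives, by differentiating
the objective along the segment from `μₙ₊₁` to `ν`, the first-order condition
`0 ≤ d⁺F(μₙ)(ν − μₙ₊₁) + L·(d⁺φ(μₙ₊₁) − d⁺φ(μₙ))(ν − μₙ₊₁)`. Combined with the three-point
identity `D(ν|μₙ) = D(ν|μₙ₊₁) + D(μₙ₊₁|μₙ) + (d⁺φ(μₙ₊₁) − d⁺φ(μₙ))(ν − μₙ₊₁)`, relative smoothness
and relative strong convexity, it yields the one-step bound
`F(μₙ₊₁) − F(ν) ≤ (L − l)·D(ν|μₙ) − L·D(ν|μₙ₊₁)`.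
Since `F(μₖ)` decreases and `D ≥ 0` by convexity of `φ`, summing these bounds with weights
`(L/(L − l))ᵏ` telescopes to the linear rate, and with weights `1` to the sublinear one.
-/

open Filter Set Topology Finset

lemma le_sub_of_tendsto_slope_of_chord_le {ψ : ℝ → ℝ} {g : ℝ}
    (hchord : ∀ t ∈ Ioc (0 : ℝ) 1, ψ t ≤ (1 - t) * ψ 0 + t * ψ 1)
    (hg : Tendsto (fun t => (ψ t - ψ 0) / t) (𝓝[>] 0) (𝓝 g)) : g ≤ ψ 1 - ψ 0 := by
  refine le_of_tendsto hg ?_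
  filter_upwards [Ioc_mem_nhdsGT zero_lt_one] with t ht
  rw [div_le_iff₀ ht.1]
  linarith [hchord t ht]

lemma nonneg_of_tendsto_slope_of_le {ψ : ℝ → ℝ} {g : ℝ} (hmin : ∀ᶠ t in 𝓝[>] 0, ψ 0 ≤ ψ t)
    (hg : Tendsto (fun t => (ψ t - ψ 0) / t) (𝓝[>] 0) (𝓝 g)) : 0 ≤ g := by
  refine ge_of_tendsto hg ?_
  filter_upwards [hmin, self_mem_nhdsWithin] with t hle (ht : 0 < t)
  exact div_nonneg (sub_nonneg.mpr hle) ht.le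

section Bregman

variable {Y : Type*} [AddCommGroup Y]

/-- `bregmanDiv f G μ ν` is the paper's `D_f(ν|μ)`, with `G` the first variation of `f` at `μ`. -/
def bregmanDiv (f G : Y → ℝ) (μ ν : Y) : ℝ := f ν - f μ - G (ν - μ)

lemma coe_bregmanDiv_toReal {φ : Y → EReal} (G : Y → ℝ) {μ ν : Y} (hμ : φ μ ≠ ⊥)
    (hμ' : φ μ ≠ ⊤) (hν : φ ν ≠ ⊥) (hν' : φ ν ≠ ⊤) :
    ((bregmanDiv (fun y => (φ y).toReal) G μ ν : ℝ) : EReal) = φ ν - φ μ - (G (ν - μ) : EReal) := by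
  simp only [bregmanDiv, EReal.coe_sub, EReal.coe_toReal hμ' hμ, EReal.coe_toReal hν' hν]

variable [Module ℝ Y]

lemma sub_le_of_three_point {f ψ : Y → ℝ} {gf gψ gψ' : Y →ₗ[ℝ] ℝ} {L l : ℝ} {μ μ' ν : Y}
    (hsmooth : bregmanDiv f gf μ μ' ≤ L * bregmanDiv ψ gψ μ μ')
    (hstrong : l * bregmanDiv ψ gψ μ ν ≤ bregmanDiv f gf μ ν)
    (hopt : 0 ≤ gf (ν - μ') + L * (gψ' (ν - μ') - gψ (ν - μ'))) :
    f μ' - f ν ≤ (L - l) * bregmanDiv ψ gψ μ ν - L * bregmanDiv ψ gψ' μ' ν := by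
  have hsplit (g : Y →ₗ[ℝ] ℝ) : g (ν - μ) = g (μ' - μ) + g (ν - μ') := by
    rw [← map_add, sub_add_sub_cancel']
  simp only [bregmanDiv, hsplit] at *
  linarith

lemma first_order_optimality_of_tendsto_slope {ψ : Y → ℝ} {gf gψ : Y →ₗ[ℝ] ℝ} {L g : ℝ} {μ μ' ν : Y}
    (hmin : ∀ᶠ t in 𝓝[>] (0 : ℝ), gf (μ' - μ) + L * bregmanDiv ψ gψ μ μ'
        ≤ gf (μ' + t • (ν - μ') - μ) + L * bregmanDiv ψ gψ μ (μ' + t • (ν - μ')))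
    (hg : Tendsto (fun t => (ψ (μ' + t • (ν - μ')) - ψ μ') / t) (𝓝[>] 0) (𝓝 g)) :
    0 ≤ gf (ν - μ') + L * (g - gψ (ν - μ')) := by
  set Ψ : ℝ → ℝ := fun t => gf (μ' + t • (ν - μ') - μ) + L * bregmanDiv ψ gψ μ (μ' + t • (ν - μ'))
  have hΨ0 : Ψ 0 = gf (μ' - μ) + L * bregmanDiv ψ gψ μ μ' := by simp [Ψ]
  refine nonneg_of_tendsto_slope_of_le (ψ := Ψ) (by rwa [hΨ0]) ?_
  refine ((hg.sub_const (gψ (ν - μ'))).const_mul L |>.const_add (gf (ν - μ'))).congr' ?_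
  filter_upwards [self_mem_nhdsWithin] with t (ht : 0 < t)
  have hlin (g : Y →ₗ[ℝ] ℝ) : g (μ' + t • (ν - μ') - μ) = g (μ' - μ) + t * g (ν - μ') := by
    rw [add_sub_right_comm, map_add, map_smul, smul_eq_mul]
  simp only [Ψ, bregmanDiv, hlin, zero_smul, add_zero]
  field_simp
  ring

end Bregman

section ConvexEReal

variable {Y : Type*} [AddCommGroup Y] [Module ℝ Y] {φ : Y → EReal}

def ERealConvex (φ : Y → EReal) : Prop :=
  ∀ x y : Y, ∀ a b : ℝ, 0 ≤ a → 0 ≤ b → a + b = 1 →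
    φ (a • x + b • y) ≤ (a : EReal) * φ x + (b : EReal) * φ y

namespace ERealConvex

lemma segment_ne_top_and_toReal_le (hφbot : ∀ y, φ y ≠ ⊥) (hφconv : ERealConvex φ) {x y : Y}
    (hx : φ x ≠ ⊤) (hy : φ y ≠ ⊤) {t : ℝ} (ht : t ∈ Icc (0 : ℝ) 1) :
    φ (x + t • (y - x)) ≠ ⊤ ∧
      (φ (x + t • (y - x))).toReal ≤ (1 - t) * (φ x).toReal + t * (φ y).toReal := by
  have hconv := hφconv x y (1 - t) t (by linarith [ht.2]) ht.1 (by ring)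
  rw [show (1 - t) • x + t • y = x + t • (y - x) by module, ← EReal.coe_toReal hx (hφbot x),
    ← EReal.coe_toReal hy (hφbot y)] at hconv
  norm_cast at hconv
  have hne : φ (x + t • (y - x)) ≠ ⊤ := ne_top_of_le_ne_top (EReal.coe_ne_top _) hconv
  refine ⟨hne, ?_⟩
  rwa [← EReal.coe_toReal hne (hφbot _), EReal.coe_le_coe_iff] at hconv

lemma tendsto_toReal_slope (hφbot : ∀ y, φ y ≠ ⊥) (hφconv : ERealConvex φ) {x y : Y}
    (hx : φ x ≠ ⊤) (hy : φ y ≠ ⊤) {g : ℝ}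
    (hg : Tendsto (fun t : ℝ => ((t⁻¹ : ℝ) : EReal) * (φ (x + t • (y - x)) - φ x))
      (𝓝[>] 0) (𝓝 (g : EReal))) :
    Tendsto (fun t : ℝ => ((φ (x + t • (y - x))).toReal - (φ x).toReal) / t) (𝓝[>] 0) (𝓝 g) := by
  refine EReal.tendsto_coe.mp (hg.congr' ?_)
  filter_upwards [Ioc_mem_nhdsGT zero_lt_one] with t ht
  have hne := (segment_ne_top_and_toReal_le hφbot hφconv hx hy (Ioc_subset_Icc_self ht)).1
  rw [div_eq_inv_mul, EReal.coe_mul, EReal.coe_sub, EReal.coe_toReal hne (hφbot _),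
    EReal.coe_toReal hx (hφbot _)]

lemma bregmanDiv_nonneg (hφbot : ∀ y, φ y ≠ ⊥) (hφconv : ERealConvex φ) {x y : Y}
    (hx : φ x ≠ ⊤) (hy : φ y ≠ ⊤) {G : Y → ℝ}
    (hG : Tendsto (fun t : ℝ => ((t⁻¹ : ℝ) : EReal) * (φ (x + t • (y - x)) - φ x))
      (𝓝[>] 0) (𝓝 (G (y - x) : EReal))) :
    0 ≤ bregmanDiv (fun y => (φ y).toReal) G x y := by
  have hle := le_sub_of_tendsto_slope_of_chord_le (ψ := fun t => (φ (x + t • (y - x))).toReal)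
    (fun t ht => by
      simpa using (segment_ne_top_and_toReal_le hφbot hφconv hx hy (Ioc_subset_Icc_self ht)).2)
    (by simpa using tendsto_toReal_slope hφbot hφconv hx hy hG)
  simp only [zero_smul, add_zero, one_smul, add_sub_cancel] at hle
  simp only [bregmanDiv]
  linarith

lemma first_order_optimality (hφbot : ∀ y, φ y ≠ ⊥) (hφconv : ERealConvex φ) {C : Set Y}
    (hC : Convex ℝ C) {gf gψ : Y →ₗ[ℝ] ℝ} {L g : ℝ} {μ μ' ν : Y} (hμ' : μ' ∈ C) (hν : ν ∈ C)
    (hμ'φ : φ μ' ≠ ⊤) (hνφ : φ ν ≠ ⊤)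
    (hmin : ∀ w ∈ C, φ w ≠ ⊤ → gf (μ' - μ) + L * bregmanDiv (fun y => (φ y).toReal) gψ μ μ'
        ≤ gf (w - μ) + L * bregmanDiv (fun y => (φ y).toReal) gψ μ w)
    (hg : Tendsto (fun t : ℝ => ((t⁻¹ : ℝ) : EReal) * (φ (μ' + t • (ν - μ')) - φ μ'))
      (𝓝[>] 0) (𝓝 (g : EReal))) :
    0 ≤ gf (ν - μ') + L * (g - gψ (ν - μ')) := by
  refine first_order_optimality_of_tendsto_slope (ψ := fun y => (φ y).toReal) (gf := gf)
    (gψ := gψ) (μ := μ) ?_ (tendsto_toReal_slope hφbot hφconv hμ'φ hνφ hg)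
  filter_upwards [Ioc_mem_nhdsGT zero_lt_one] with t ht
  exact hmin _ (hC.add_smul_sub_mem hμ' hν (Ioc_subset_Icc_self ht))
    (segment_ne_top_and_toReal_le hφbot hφconv hμ'φ hνφ (Ioc_subset_Icc_self ht)).1

end ERealConvex

end ConvexEReal

section Rates

variable {a d : ℕ → ℝ} {L l : ℝ} {n : ℕ}

lemma mul_sum_le_of_antitone_of_le_sub {c w : ℕ → ℝ} (ha : Antitone a) (hw : ∀ k, 0 ≤ w k)
    (hstep : ∀ k, w k * a (k + 1) ≤ c k - c (k + 1)) :
    a n * ∑ k ∈ range n, w k ≤ c 0 - c n := by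
  rw [← sum_range_sub', mul_sum]
  refine sum_le_sum fun k hk => ?_
  rw [mul_comm]
  exact (mul_le_mul_of_nonneg_left (ha (mem_range.mp hk)) (hw k)).trans (hstep k)

lemma le_sublinear_rate_of_antitone (hl : 0 ≤ l) (hlL : l ≤ L) (ha : Antitone a)
    (hd : ∀ k, 0 ≤ d k) (hstep : ∀ k, a (k + 1) ≤ (L - l) * d k - L * d (k + 1)) (hn : 1 ≤ n) :
    a n ≤ L / n * d 0 := by
  have hsum := mul_sum_le_of_antitone_of_le_sub (n := n) (w := fun _ => 1) (c := (L * d ·)) ha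
    (fun _ => zero_le_one) (fun k => by nlinarith [hstep k, mul_nonneg hl (hd k)])
  simp only [sum_const, card_range, nsmul_eq_mul, mul_one] at hsum
  rw [div_mul_eq_mul_div, le_div_iff₀ (by exact_mod_cast hn)]
  nlinarith [mul_nonneg (hl.trans hlL) (hd n)]

lemma le_linear_rate_of_antitone (hl : 0 < l) (hlL : l < L) (ha : Antitone a)
    (hd : ∀ k, 0 ≤ d k) (hstep : ∀ k, a (k + 1) ≤ (L - l) * d k - L * d (k + 1)) (hn : 1 ≤ n) :
    a n ≤ l / ((1 + l / (L - l)) ^ n - 1) * d 0 := by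
  set r := 1 + l / (L - l)
  have hLl : 0 < L - l := sub_pos.mpr hlL
  have hr : r - 1 = l / (L - l) := by ring
  have hr1 : 1 < r := by linarith [div_pos hl hLl]
  have hLr : (L - l) * r = L := by simp only [r]; field_simp; ring
  -- weighting the `k`-th step by `r ^ k = (L / (L - l)) ^ k` makes it telescope
  have hsum := mul_sum_le_of_antitone_of_le_sub (n := n) (w := (r ^ ·))
    (c := fun k => (L - l) * (r ^ k * d k)) ha (fun k => by positivity) (fun k => by
      have := mul_le_mul_of_nonneg_left (hstep k) (pow_nonneg (by linarith : 0 ≤ r) k)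
      linear_combination this + r ^ k * d (k + 1) * hLr)
  rw [geom_sum_eq hr1.ne', hr] at hsum
  have hrn : 0 < r ^ n - 1 := sub_pos.mpr (one_lt_pow₀ hr1 (by omega))
  have hdn : 0 ≤ (L - l) * (r ^ n * d n) := by have := hd n; positivity
  rw [div_mul_eq_mul_div, le_div_iff₀ hrn]
  field_simp at hsum
  nlinarith

end Rates

theorem mirror_descent_convergence_rate_general
    {Y : Type*} [AddCommGroup Y] [Module ℝ Y] [TopologicalSpace Y]
    (F φ : Y → EReal)
    (hFbot : ∀ y, F y ≠ ⊥) (hφbot : ∀ y, φ y ≠ ⊥)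
    (hφconv : ∀ x y : Y, ∀ a b : ℝ, 0 ≤ a → 0 ≤ b → a + b = 1 →
      φ (a • x + b • y) ≤ (a : EReal) * φ x + (b : EReal) * φ y)
    (C R : Set Y) (hC : Convex ℝ C) (hRC : R ⊆ C)
    (L l : ℝ) (hl0 : 0 ≤ l) (hlL : l ≤ L)
    (μ : ℕ → Y) (hμR : ∀ n, μ n ∈ R)
    (hμdom : ∀ n, F (μ n) ≠ ⊤ ∧ φ (μ n) ≠ ⊤)
    -- first variations of `F` and of `φ` at each iterate, in directions within `C`
    (GF Gφ : ℕ → (Y →L[ℝ] ℝ))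
    (hGφ : ∀ n, ∀ ν ∈ C ∩ {y : Y | φ y ≠ ⊤},
      Tendsto (fun h : ℝ => ((h⁻¹ : ℝ) : EReal) * (φ (μ n + h • (ν - μ n)) - φ (μ n)))
        (nhdsWithin (0 : ℝ) (Set.Ioi 0)) (nhds ((Gφ n (ν - μ n) : ℝ) : EReal)))
    -- `L`-relative smoothness and `l`-relative strong convexity along the iterates, on `R`
    (hsmooth : ∀ n, ∀ ν ∈ R ∩ {y : Y | F y ≠ ⊤} ∩ {y : Y | φ y ≠ ⊤},
      F ν - F (μ n) - ((GF n (ν - μ n) : ℝ) : EReal)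
        ≤ (L : EReal) * (φ ν - φ (μ n) - ((Gφ n (ν - μ n) : ℝ) : EReal)))
    (hstrong : ∀ n, ∀ ν ∈ R ∩ {y : Y | F y ≠ ⊤} ∩ {y : Y | φ y ≠ ⊤},
      (l : EReal) * (φ ν - φ (μ n) - ((Gφ n (ν - μ n) : ℝ) : EReal))
        ≤ F ν - F (μ n) - ((GF n (ν - μ n) : ℝ) : EReal))
    -- `μ (n+1)` is the unique minimizer over `C` of the mirror-descent objective
    (hargmin : ∀ n, μ (n + 1) ∈ C ∧
      (∀ ν ∈ C,
        ((GF n (μ (n + 1) - μ n) : ℝ) : EReal)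
            + (L : EReal) * (φ (μ (n + 1)) - φ (μ n) - ((Gφ n (μ (n + 1) - μ n) : ℝ) : EReal))
          ≤ ((GF n (ν - μ n) : ℝ) : EReal)
            + (L : EReal) * (φ ν - φ (μ n) - ((Gφ n (ν - μ n) : ℝ) : EReal))) ∧
      (∀ ν ∈ C,
        ((GF n (ν - μ n) : ℝ) : EReal)
            + (L : EReal) * (φ ν - φ (μ n) - ((Gφ n (ν - μ n) : ℝ) : EReal))
          = ((GF n (μ (n + 1) - μ n) : ℝ) : EReal)
            + (L : EReal) * (φ (μ (n + 1)) - φ (μ n) - ((Gφ n (μ (n + 1) - μ n) : ℝ) : EReal))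
          → ν = μ (n + 1))) :
    (∀ n, F (μ (n + 1)) ≤ F (μ n)) ∧
    (∀ n : ℕ, 1 ≤ n → ∀ ν, ν ∈ R → F ν ≠ ⊤ → φ ν ≠ ⊤ →
      (F (μ n) - F ν
          ≤ ((L / (n : ℝ) : ℝ) : EReal) * (φ ν - φ (μ 0) - ((Gφ 0 (ν - μ 0) : ℝ) : EReal))) ∧
      (0 < l → l < L →
        F (μ n) - F ν
          ≤ ((l / ((1 + l / (L - l)) ^ n - 1) : ℝ) : EReal)
              * (φ ν - φ (μ 0) - ((Gφ 0 (ν - μ 0) : ℝ) : EReal)))) := by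
  set f : Y → ℝ := fun y => (F y).toReal
  set ψ : Y → ℝ := fun y => (φ y).toReal
  have hμC n : μ n ∈ C := hRC (hμR n)
  have castDF n {ν} (hν : F ν ≠ ⊤) :=
    coe_bregmanDiv_toReal (GF n) (hFbot (μ n)) (hμdom n).1 (hFbot ν) hν
  have castDφ n {ν} (hν : φ ν ≠ ⊤) :=
    coe_bregmanDiv_toReal (Gφ n) (hφbot (μ n)) (hμdom n).2 (hφbot ν) hν
  have argmin n w (hw : w ∈ C) (hwφ : φ w ≠ ⊤) :
      GF n (μ (n + 1) - μ n) + L * bregmanDiv ψ (Gφ n) (μ n) (μ (n + 1))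
        ≤ GF n (w - μ n) + L * bregmanDiv ψ (Gφ n) (μ n) w := by
    have h := (hargmin n).2.1 w hw
    rw [← castDφ n (hμdom _).2, ← castDφ n hwφ] at h
    exact_mod_cast h
  have smooth n : bregmanDiv f (GF n) (μ n) (μ (n + 1))
      ≤ L * bregmanDiv ψ (Gφ n) (μ n) (μ (n + 1)) := by
    have h := hsmooth n (μ (n + 1)) ⟨⟨hμR _, (hμdom _).1⟩, (hμdom _).2⟩
    rw [← castDF n (hμdom _).1, ← castDφ n (hμdom _).2] at h
    exact_mod_cast h
  have descent n : f (μ (n + 1)) ≤ f (μ n) := by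
    have hmin := argmin n (μ n) (hμC n) (hμdom n).2
    have hsm := smooth n
    simp only [bregmanDiv, sub_self, map_zero] at hmin hsm
    linarith
  have step n ν (hν : ν ∈ R) (hνF : F ν ≠ ⊤) (hνφ : φ ν ≠ ⊤) : f (μ (n + 1)) - f ν
      ≤ (L - l) * bregmanDiv ψ (Gφ n) (μ n) ν - L * bregmanDiv ψ (Gφ (n + 1)) (μ (n + 1)) ν := by
    have strong := hstrong n ν ⟨⟨hν, hνF⟩, hνφ⟩
    rw [← castDF n hνF, ← castDφ n hνφ] at strong
    exact sub_le_of_three_point (gψ' := Gφ (n + 1)) (smooth n) (by exact_mod_cast strong)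
      (ERealConvex.first_order_optimality hφbot hφconv hC (hμC _) (hRC hν) (hμdom _).2 hνφ
        (argmin n) (hGφ (n + 1) ν ⟨hRC hν, hνφ⟩))
  have castF {ν} (hν : F ν ≠ ⊤) : F ν = (f ν : EReal) := (EReal.coe_toReal hν (hFbot ν)).symm
  refine ⟨fun n => ?_, fun n hn ν hν hνF hνφ => ?_⟩
  · rw [castF (hμdom _).1, castF (hμdom _).1]
    exact_mod_cast descent n
  have hD k : 0 ≤ bregmanDiv ψ (Gφ k) (μ k) ν :=
    ERealConvex.bregmanDiv_nonneg hφbot hφconv (hμdom k).2 hνφ (hGφ k ν ⟨hRC hν, hνφ⟩)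
  have hanti : Antitone fun k => f (μ k) - f ν :=
    antitone_nat_of_succ_le fun k => by linarith [descent k]
  rw [castF (hμdom _).1, castF hνF, ← castDφ 0 hνφ]
  exact ⟨by exact_mod_cast le_sublinear_rate_of_antitone hl0 hlL hanti hD (step · ν hν hνF hνφ) hn,
    fun hl hlt => by
      exact_mod_cast le_linear_rate_of_antitone hl hlt hanti hD (step · ν hν hνF hνφ) hn⟩

/-- Convergence rate of mirror descent under relative smoothness and relative
strong convexity: `F` and `φ` are convex proper, `F` is `L`-smooth and `l`-strongly convex
relative to `φ` on `R ⊆ C` (`0 ≤ l ≤ L`), the iterates `μ (n+1)` are the unique minimizers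
over `C` of `ν ↦ d⁺F(μ n)(ν − μ n) + L·D_φ(ν|μ n)` and belong to `R`, and `F, φ` admit first
variations `GF n, Gφ n` at each iterate `μ n`. Then the objective values decrease and for all
`n ≥ 1` and all `ν ∈ dom F ∩ dom φ ∩ R`:
`F(μ n) − F(ν) ≤ l·D_φ(ν|μ 0)/((1 + l/(L−l))^n − 1) ≤ (L/n)·D_φ(ν|μ 0)`
(the first bound when `0 < l < L`, the second always, being the `l → 0⁺` limit). -/
theorem mirror_descent_convergence_rate
    {Y : Type*} [AddCommGroup Y] [Module ℝ Y] [TopologicalSpace Y]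
    (F φ : Y → EReal)
    (hFbot : ∀ y, F y ≠ ⊥) (hφbot : ∀ y, φ y ≠ ⊥)
    (hFconv : ∀ x y : Y, ∀ a b : ℝ, 0 ≤ a → 0 ≤ b → a + b = 1 →
      F (a • x + b • y) ≤ (a : EReal) * F x + (b : EReal) * F y)
    (hφconv : ∀ x y : Y, ∀ a b : ℝ, 0 ≤ a → 0 ≤ b → a + b = 1 →
      φ (a • x + b • y) ≤ (a : EReal) * φ x + (b : EReal) * φ y)
    (hφstrict : ∀ x y : Y, x ≠ y → φ x ≠ ⊤ → φ y ≠ ⊤ → ∀ a b : ℝ, 0 < a → 0 < b → a + b = 1 →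
      φ (a • x + b • y) < (a : EReal) * φ x + (b : EReal) * φ y)
    (C R : Set Y) (hC : Convex ℝ C) (hRC : R ⊆ C)
    (L l : ℝ) (hl0 : 0 ≤ l) (hlL : l ≤ L)
    (μ : ℕ → Y) (hμR : ∀ n, μ n ∈ R)
    (hμdom : ∀ n, F (μ n) ≠ ⊤ ∧ φ (μ n) ≠ ⊤)
    -- first variations of `F` and of `φ` at each iterate, in directions within `C`
    (GF Gφ : ℕ → (Y →L[ℝ] ℝ))
    (hGF : ∀ n, ∀ ν ∈ C ∩ {y : Y | F y ≠ ⊤},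
      Tendsto (fun h : ℝ => ((h⁻¹ : ℝ) : EReal) * (F (μ n + h • (ν - μ n)) - F (μ n)))
        (nhdsWithin (0 : ℝ) (Set.Ioi 0)) (nhds ((GF n (ν - μ n) : ℝ) : EReal)))
    (hGφ : ∀ n, ∀ ν ∈ C ∩ {y : Y | φ y ≠ ⊤},
      Tendsto (fun h : ℝ => ((h⁻¹ : ℝ) : EReal) * (φ (μ n + h • (ν - μ n)) - φ (μ n)))
        (nhdsWithin (0 : ℝ) (Set.Ioi 0)) (nhds ((Gφ n (ν - μ n) : ℝ) : EReal)))
    -- `L`-relative smoothness and `l`-relative strong convexity along the iterates, on `R`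
    (hsmooth : ∀ n, ∀ ν ∈ R ∩ {y : Y | F y ≠ ⊤} ∩ {y : Y | φ y ≠ ⊤},
      F ν - F (μ n) - ((GF n (ν - μ n) : ℝ) : EReal)
        ≤ (L : EReal) * (φ ν - φ (μ n) - ((Gφ n (ν - μ n) : ℝ) : EReal)))
    (hstrong : ∀ n, ∀ ν ∈ R ∩ {y : Y | F y ≠ ⊤} ∩ {y : Y | φ y ≠ ⊤},
      (l : EReal) * (φ ν - φ (μ n) - ((Gφ n (ν - μ n) : ℝ) : EReal))
        ≤ F ν - F (μ n) - ((GF n (ν - μ n) : ℝ) : EReal))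
    -- `μ (n+1)` is the unique minimizer over `C` of the mirror-descent objective
    (hargmin : ∀ n, μ (n + 1) ∈ C ∧
      (∀ ν ∈ C,
        ((GF n (μ (n + 1) - μ n) : ℝ) : EReal)
            + (L : EReal) * (φ (μ (n + 1)) - φ (μ n) - ((Gφ n (μ (n + 1) - μ n) : ℝ) : EReal))
          ≤ ((GF n (ν - μ n) : ℝ) : EReal)
            + (L : EReal) * (φ ν - φ (μ n) - ((Gφ n (ν - μ n) : ℝ) : EReal))) ∧
      (∀ ν ∈ C,
        ((GF n (ν - μ n) : ℝ) : EReal)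
            + (L : EReal) * (φ ν - φ (μ n) - ((Gφ n (ν - μ n) : ℝ) : EReal))
          = ((GF n (μ (n + 1) - μ n) : ℝ) : EReal)
            + (L : EReal) * (φ (μ (n + 1)) - φ (μ n) - ((Gφ n (μ (n + 1) - μ n) : ℝ) : EReal))
          → ν = μ (n + 1))) :
    (∀ n, F (μ (n + 1)) ≤ F (μ n)) ∧
    (∀ n : ℕ, 1 ≤ n → ∀ ν, ν ∈ R → F ν ≠ ⊤ → φ ν ≠ ⊤ →
      (F (μ n) - F ν
          ≤ ((L / (n : ℝ) : ℝ) : EReal) * (φ ν - φ (μ 0) - ((Gφ 0 (ν - μ 0) : ℝ) : EReal))) ∧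
      (0 < l → l < L →
        F (μ n) - F ν
          ≤ ((l / ((1 + l / (L - l)) ^ n - 1) : ℝ) : EReal)
              * (φ ν - φ (μ 0) - ((Gφ 0 (ν - μ 0) : ℝ) : EReal)))) :=
  mirror_descent_convergence_rate_general F φ hFbot hφbot hφconv C R hC hRC L l hl0 hlL μ hμR hμdom
    GF Gφ hGφ hsmooth hstrong hargmin
end

section
/- Quantitative stability of entropic potentials: let π = e^{(f+g−c)/ε} μ⊗ν and π̃ = e^{(f̃+g̃−c)/ε} μ̃⊗ν̃ be probability measures on X × Y whose potentials satisfy the Schrödinger fixed-point equations g = T_μ(f), f = T_ν(g), g̃ = T_μ̃(f̃), f̃ = T_ν̃(g̃). Then ‖f − f̃‖_var + ‖g − g̃‖_var ≤ 2ε·e^{3D_c/ε}·(‖μ − μ̃‖_TV + ‖ν − ν̃‖_TV). -/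
/-!
Put `a x = (g̃ − c x ·) / ε` and `u = (g − g̃) / ε`. The fixed-point equations give
`f x − f̃ x = −ε · cgf_{ν.tilted (a x)}(u)(1) + ε (log ∫ e^{a x} dν̃ − log ∫ e^{a x} dν)`.

*Contraction.* The derivative of `t ↦ cgf_ρ(u)(t)` is the mean of `u` under `ρ.tilted (t u)`.
The tilts `ν.tilted (a x)` and `ν.tilted (a x')` differ by the log-density `a x' − a x`, whose
oscillation is at most `2 D_c / ε` by the twist bound; two probability measures related by such a
density are within total variation `2 (1 − e^{−D_c/ε})`, so means of `u` under them differ by at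
most `(1 − e^{−D_c/ε}) ‖u‖_var`. As both cgfs vanish at `0`, the mean value inequality on `[0, 1]`
bounds the oscillation in `x` of the cgf term by `(1 − e^{−D_c/ε}) ‖g − g̃‖_var / ε`.

*Stability.* By the fixed-point equation for `g̃`, the oscillation of `a x` is also at most
`2 D_c / ε`, so `e^{a x}` lies in a window of ratio `e^{2 D_c/ε}` and the two log-partition
functions differ by at most `(e^{2 D_c/ε} − 1) / 2 · ‖ν − ν̃‖_TV`.

Together, `‖f − f̃‖_var ≤ (1 − e^{−D_c/ε}) ‖g − g̃‖_var + ε (e^{2 D_c/ε} − 1) ‖ν − ν̃‖_TV`, and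
symmetrically with the roles of `X` and `Y` exchanged. Adding the two and dividing by
`e^{−D_c/ε}` gives the bound `ε (e^{3 D_c/ε} − e^{D_c/ε}) (‖μ − μ̃‖_TV + ‖ν − ν̃‖_TV)`.
-/

open MeasureTheory Real

/- The oscillation seminorm `‖h‖_var = sup h − inf h`. -/
noncomputable def oscVar {α : Type*} (h : α → ℝ) : ℝ :=
  sSup (Set.range h) - sInf (Set.range h)

/- `‖μ − ν‖_TV = |μ − ν|(univ)`, the total variation norm without the factor `1/2`. -/
noncomputable def tvDist {α : Type*} [MeasurableSpace α]
    (μ ν : Measure α) [IsFiniteMeasure μ] [IsFiniteMeasure ν] : ℝ :=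
  ((μ.toSignedMeasure - ν.toSignedMeasure).totalVariation Set.univ).toReal

open Set ProbabilityTheory

section Oscillation

variable {α : Type*} {h : α → ℝ} {B K r : ℝ}

lemma sSup_range_le_sInf_range_add [Nonempty α] (hK : ∀ a b, h a - h b ≤ K) :
    sSup (range h) ≤ sInf (range h) + K := by
  refine csSup_le (range_nonempty h) ?_
  rintro _ ⟨a, rfl⟩
  have : h a - K ≤ sInf (range h) :=
    le_csInf (range_nonempty h) (by rintro _ ⟨b, rfl⟩; linarith [hK a b])
  linarith

lemma oscVar_le_of_forall_sub_le [Nonempty α] (hK : ∀ a b, h a - h b ≤ K) : oscVar h ≤ K := by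
  rw [oscVar]; linarith [sSup_range_le_sInf_range_add hK]

lemma sub_le_oscVar (hB : ∀ a, |h a| ≤ B) (a b : α) : h a - h b ≤ oscVar h := by
  have h₁ : h a ≤ sSup (range h) :=
    le_csSup ⟨B, by rintro _ ⟨c, rfl⟩; exact (abs_le.1 (hB c)).2⟩ (mem_range_self a)
  have h₂ : sInf (range h) ≤ h b :=
    csInf_le ⟨-B, by rintro _ ⟨c, rfl⟩; exact (abs_le.1 (hB c)).1⟩ (mem_range_self b)
  rw [oscVar]; linarith

lemma exists_abs_sub_le_of_forall_sub_le [Nonempty α] (hK : ∀ a b, h a - h b ≤ 2 * r) :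
    ∃ m, ∀ a, |h a - m| ≤ r := by
  obtain ⟨a₀⟩ := ‹Nonempty α›
  have h_above : BddAbove (range h) := ⟨h a₀ + 2 * r, by rintro _ ⟨a, rfl⟩; linarith [hK a a₀]⟩
  have h_below : BddBelow (range h) := ⟨h a₀ - 2 * r, by rintro _ ⟨a, rfl⟩; linarith [hK a₀ a]⟩
  have hsup := sSup_range_le_sInf_range_add hK
  refine ⟨(sSup (range h) + sInf (range h)) / 2, fun a => abs_le.2 ⟨?_, ?_⟩⟩
  · linarith [csInf_le h_below (mem_range_self a)]
  · linarith [le_csSup h_above (mem_range_self a)]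

end Oscillation

section TotalVariation

variable {α : Type*} [MeasurableSpace α] {μ ν : Measure α} {φ : α → ℝ}

lemma tvDist_nonneg [IsFiniteMeasure μ] [IsFiniteMeasure ν] : 0 ≤ tvDist μ ν :=
  ENNReal.toReal_nonneg

lemma abs_integral_sub_integral_le_mul_tvDist [IsFiniteMeasure μ] [IsFiniteMeasure ν] {C : ℝ}
    (hφ : Measurable φ) (hC : ∀ a, |φ a| ≤ C) :
    |∫ a, φ a ∂μ - ∫ a, φ a ∂ν| ≤ C * tvDist μ ν := by
  set s := μ.toSignedMeasure - ν.toSignedMeasure with hs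
  set P := s.toJordanDecomposition.posPart
  set N := s.toJordanDecomposition.negPart
  have hPN : μ + N = ν + P := by
    rw [← Measure.toSignedMeasure_eq_toSignedMeasure_iff, Measure.toSignedMeasure_add,
      Measure.toSignedMeasure_add, add_comm ν.toSignedMeasure, ← sub_eq_sub_iff_add_eq_add, ← hs]
    exact s.toSignedMeasure_toJordanDecomposition.symm
  have hint : ∀ (ρ : Measure α) [IsFiniteMeasure ρ], Integrable φ ρ :=
    fun ρ _ => .of_bound hφ.aestronglyMeasurable C (.of_forall hC)
  have hbound : ∀ (ρ : Measure α) [IsFiniteMeasure ρ], |∫ a, φ a ∂ρ| ≤ C * ρ.real univ :=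
    fun ρ _ => by simpa using norm_integral_le_of_norm_le_const (μ := ρ) (f := φ) (.of_forall hC)
  have hsplit : ∫ a, φ a ∂μ - ∫ a, φ a ∂ν = ∫ a, φ a ∂P - ∫ a, φ a ∂N := by
    have := congrArg (fun ρ => ∫ a, φ a ∂ρ) hPN
    simp only [integral_add_measure (hint _) (hint _)] at this
    linarith
  have htv : tvDist μ ν = P.real univ + N.real univ := by
    rw [tvDist, ← hs, SignedMeasure.totalVariation, Measure.add_apply,
      ENNReal.toReal_add (measure_ne_top _ _) (measure_ne_top _ _)]
    rfl
  rw [hsplit, htv, mul_add]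
  exact (abs_sub _ _).trans (add_le_add (hbound P) (hbound N))

lemma abs_integral_sub_integral_le_of_abs_sub_le [IsProbabilityMeasure μ] [IsProbabilityMeasure ν]
    {c r : ℝ} (hφ : Measurable φ) (hr : ∀ a, |φ a - c| ≤ r) :
    |∫ a, φ a ∂μ - ∫ a, φ a ∂ν| ≤ r * tvDist μ ν := by
  have hcenter : ∀ (ρ : Measure α) [IsProbabilityMeasure ρ],
      ∫ a, (φ a - c) ∂ρ = ∫ a, φ a ∂ρ - c := fun ρ _ => by
    have : Integrable φ ρ := .of_bound hφ.aestronglyMeasurable (|c| + r) (.of_forall fun a => by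
      have := abs_sub_abs_le_abs_sub (φ a) c
      rw [Real.norm_eq_abs]; linarith [hr a])
    rw [integral_sub this (integrable_const c), integral_const, probReal_univ, one_smul]
  have := abs_integral_sub_integral_le_mul_tvDist (μ := μ) (ν := ν) (hφ.sub_const c) hr
  rwa [hcenter μ, hcenter ν, sub_sub_sub_cancel_right] at this

end TotalVariation

lemma abs_log_sub_log_le_div {x y L : ℝ} (hL : 0 < L) (hx : L ≤ x) (hy : L ≤ y) :
    |log x - log y| ≤ |x - y| / L := by
  have key : ∀ {a b : ℝ}, L ≤ a → L ≤ b → log a - log b ≤ |a - b| / L := fun {a b} ha hb => by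
    have ha₀ := hL.trans_le ha
    have hb₀ := hL.trans_le hb
    calc log a - log b = log (a / b) := (log_div ha₀.ne' hb₀.ne').symm
    _ ≤ a / b - 1 := log_le_sub_one_of_pos (div_pos ha₀ hb₀)
    _ = (a - b) / b := by field_simp
    _ ≤ |a - b| / b := by gcongr; exact le_abs_self _
    _ ≤ |a - b| / L := by gcongr
  rw [abs_le]
  refine ⟨?_, key hx hy⟩
  linarith [abs_sub_comm x y ▸ key hy hx]

section LogPartition

variable {α : Type*} [MeasurableSpace α] {μ ν : Measure α} {φ u : α → ℝ}

lemma integrable_exp_of_abs_sub_le [IsFiniteMeasure μ] {m d : ℝ} (hφ : Measurable φ)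
    (hm : ∀ a, |φ a - m| ≤ d) : Integrable (fun a => exp (φ a)) μ :=
  .of_bound hφ.exp.aestronglyMeasurable (exp (m + d)) (.of_forall fun a => by
    rw [norm_of_nonneg (exp_pos _).le]
    exact exp_le_exp.2 (by linarith [(abs_le.1 (hm a)).2]))

lemma integrable_exp_of_forall_sub_le [IsFiniteMeasure μ] [Nonempty α] {K : ℝ}
    (hφ : Measurable φ) (hK : ∀ a b, φ a - φ b ≤ K) : Integrable (fun a => exp (φ a)) μ := by
  obtain ⟨m, hm⟩ := exists_abs_sub_le_of_forall_sub_le (h := φ) (r := K / 2)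
    (by simpa only [mul_div_cancel₀ K two_ne_zero] using hK)
  exact integrable_exp_of_abs_sub_le hφ hm

lemma abs_log_integral_exp_sub_le [IsProbabilityMeasure μ] [IsProbabilityMeasure ν] {d : ℝ}
    (hφ : Measurable φ) (hd : ∀ a b, φ a - φ b ≤ 2 * d) :
    |log (∫ a, exp (φ a) ∂μ) - log (∫ a, exp (φ a) ∂ν)| ≤ (exp (2 * d) - 1) / 2 * tvDist μ ν := by
  have := nonempty_of_isProbabilityMeasure μ
  obtain ⟨m, hm⟩ := exists_abs_sub_le_of_forall_sub_le hd
  have hexp : ∀ a, exp (m - d) ≤ exp (φ a) ∧ exp (φ a) ≤ exp (m + d) := fun a => by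
    obtain ⟨h₁, h₂⟩ := abs_le.1 (hm a)
    exact ⟨exp_le_exp.2 (by linarith), exp_le_exp.2 (by linarith)⟩
  have hlower : ∀ (ρ : Measure α) [IsProbabilityMeasure ρ], exp (m - d) ≤ ∫ a, exp (φ a) ∂ρ :=
    fun ρ _ => by
      simpa using integral_mono (integrable_const _) (integrable_exp_of_abs_sub_le (μ := ρ) hφ hm)
        (fun a => (hexp a).1)
  have hdiff := abs_integral_sub_integral_le_of_abs_sub_le (μ := μ) (ν := ν) hφ.exp
    (c := (exp (m + d) + exp (m - d)) / 2) (r := (exp (m + d) - exp (m - d)) / 2)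
    (fun a => abs_le.2 ⟨by linarith [hexp a], by linarith [hexp a]⟩)
  have hratio : exp (m + d) = exp (2 * d) * exp (m - d) := by rw [← exp_add]; ring_nf
  calc |log (∫ a, exp (φ a) ∂μ) - log (∫ a, exp (φ a) ∂ν)|
      ≤ |∫ a, exp (φ a) ∂μ - ∫ a, exp (φ a) ∂ν| / exp (m - d) :=
        abs_log_sub_log_le_div (exp_pos _) (hlower μ) (hlower ν)
    _ ≤ (exp (m + d) - exp (m - d)) / 2 * tvDist μ ν / exp (m - d) := by gcongr
    _ = (exp (2 * d) - 1) / 2 * tvDist μ ν := by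
        rw [hratio]; field_simp

lemma log_integral_exp_le_add [NeZero μ] {ψ : α → ℝ} {k : ℝ}
    (hφ : Integrable (fun a => exp (φ a)) μ) (hψ : Integrable (fun a => exp (ψ a)) μ)
    (hk : ∀ a, φ a ≤ ψ a + k) :
    log (∫ a, exp (φ a) ∂μ) ≤ log (∫ a, exp (ψ a) ∂μ) + k := by
  have hmono : ∫ a, exp (φ a) ∂μ ≤ (∫ a, exp (ψ a) ∂μ) * exp k := by
    rw [← integral_mul_const]
    exact integral_mono hφ (hψ.mul_const _) fun a => by rw [← exp_add]; exact exp_le_exp.2 (hk a)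
  calc log (∫ a, exp (φ a) ∂μ) ≤ log ((∫ a, exp (ψ a) ∂μ) * exp k) :=
        log_le_log (integral_exp_pos hφ) hmono
    _ = log (∫ a, exp (ψ a) ∂μ) + k := by
        rw [log_mul (integral_exp_pos hψ).ne' (exp_pos k).ne', log_exp]

lemma log_integral_exp_add_eq [NeZero μ] (hφ : Integrable (fun a => exp (φ a)) μ)
    (hφu : Integrable (fun a => exp (φ a + u a)) μ) :
    log (∫ a, exp (φ a + u a) ∂μ) = log (∫ a, exp (φ a) ∂μ) + cgf u (μ.tilted φ) 1 := by
  have hmgf : mgf u (μ.tilted φ) 1 = (∫ a, exp (φ a + u a) ∂μ) / ∫ a, exp (φ a) ∂μ := by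
    simpa [mgf] using integral_exp_tilted (μ := μ) φ u
  rw [cgf, hmgf, log_div (integral_exp_pos hφu).ne' (integral_exp_pos hφ).ne']
  ring

end LogPartition

section Contraction

variable {α : Type*} [MeasurableSpace α] {μ : Measure α} {b u : α → ℝ} {d K : ℝ}

lemma integral_abs_sub_le_of_mul_le {p q : α → ℝ} {κ : ℝ} (hp : Integrable p μ)
    (hq : Integrable q μ) (hp₀ : ∀ a, 0 ≤ p a) (hκ : κ ≤ 1) (hpq : ∀ a, κ * p a ≤ q a)
    (heq : ∫ a, p a ∂μ = ∫ a, q a ∂μ) :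
    ∫ a, |q a - p a| ∂μ ≤ 2 * (1 - κ) * ∫ a, p a ∂μ := by
  have hpt : ∀ a, |q a - p a| ≤ (q a - p a) + 2 * (1 - κ) * p a := fun a => by
    rcases le_total (p a) (q a) with h | h
    · rw [abs_of_nonneg (by linarith)]; nlinarith [hp₀ a]
    · rw [abs_of_nonpos (by linarith)]; linarith [hpq a]
  calc ∫ a, |q a - p a| ∂μ ≤ ∫ a, ((q a - p a) + 2 * (1 - κ) * p a) ∂μ :=
        integral_mono (hq.sub hp).abs ((hq.sub hp).add (hp.const_mul _)) hpt
    _ = 2 * (1 - κ) * ∫ a, p a ∂μ := by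
        rw [integral_add (f := fun a => q a - p a) (hq.sub hp) (hp.const_mul _),
          integral_sub hq hp, integral_const_mul, heq]
        ring

lemma integral_abs_exp_div_sub_one_le [IsProbabilityMeasure μ] (hb : Measurable b)
    (hd : ∀ a a', b a - b a' ≤ 2 * d) :
    ∫ a, |exp (b a) / (∫ a', exp (b a') ∂μ) - 1| ∂μ ≤ 2 * (1 - exp (-d)) := by
  have := nonempty_of_isProbabilityMeasure μ
  obtain ⟨m, hm⟩ := exists_abs_sub_le_of_forall_sub_le hd
  have hd₀ : 0 ≤ d := (abs_nonneg _).trans (hm (Classical.arbitrary α))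
  set Z := ∫ a', exp (b a') ∂μ
  have hb_int := integrable_exp_of_abs_sub_le (μ := μ) hb hm
  have hZ : 0 < Z := integral_exp_pos hb_int
  have hρ : Integrable (fun a => exp (b a) / Z) μ := hb_int.div_const Z
  have hρ₁ : ∫ a, exp (b a) / Z ∂μ = ∫ _, (1 : ℝ) ∂μ := by
    rw [integral_div, div_self hZ.ne', integral_const, probReal_univ, one_smul]
  have hκ : exp (-d) ≤ 1 := exp_le_one_iff.2 (by linarith)
  -- The density takes values in `[exp (m - d) / Z, exp (m + d) / Z]`, an interval of ratio
  -- `exp (2 * d)`; comparing `Z` with `exp m` places it above `exp (-d)` or below `exp d`.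
  rcases le_total Z (exp m) with hZm | hZm
  · have hlow : ∀ a, exp (-d) * 1 ≤ exp (b a) / Z := fun a => by
      rw [mul_one, le_div_iff₀ hZ]
      calc exp (-d) * Z ≤ exp (-d) * exp m := by gcongr
        _ ≤ exp (b a) := by rw [← exp_add]; exact exp_le_exp.2 (by linarith [(abs_le.1 (hm a)).1])
    simpa using integral_abs_sub_le_of_mul_le (integrable_const 1) hρ (fun _ => zero_le_one) hκ
      hlow hρ₁.symm
  · have hup : ∀ a, exp (-d) * (exp (b a) / Z) ≤ 1 := fun a => by
      rw [mul_div_assoc', div_le_one hZ, ← exp_add]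
      exact (exp_le_exp.2 (by linarith [(abs_le.1 (hm a)).2])).trans hZm
    simpa [abs_sub_comm, hρ₁] using integral_abs_sub_le_of_mul_le hρ (integrable_const 1)
      (fun a => (div_pos (exp_pos _) hZ).le) hκ hup hρ₁

lemma integral_mul_sub_integral_le [IsProbabilityMeasure μ] {ρ : α → ℝ} {m r : ℝ}
    (hρ : Integrable ρ μ) (hρ₁ : ∫ a, ρ a ∂μ = 1) (hu : Measurable u) (hm : ∀ a, |u a - m| ≤ r) :
    ∫ a, ρ a * u a ∂μ - ∫ a, u a ∂μ ≤ r * ∫ a, |ρ a - 1| ∂μ := by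
  have hu_bdd : ∀ a, ‖u a‖ ≤ |m| + r := fun a => by
    rw [Real.norm_eq_abs]; linarith [abs_sub_abs_le_abs_sub (u a) m, hm a]
  have hu_int : Integrable u μ := .of_bound hu.aestronglyMeasurable _ (.of_forall hu_bdd)
  have hρu : Integrable (fun a => ρ a * u a) μ :=
    hρ.mul_bdd hu.aestronglyMeasurable (.of_forall hu_bdd)
  have hρu_sub : Integrable (fun a => ρ a * u a - u a) μ := hρu.sub hu_int
  have hρ_sub : Integrable (fun a => ρ a - 1) μ := hρ.sub (integrable_const 1)
  have hu_sub : ∀ a, ‖u a - m‖ ≤ r := hm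
  have hcenter : ∫ a, ρ a * u a ∂μ - ∫ a, u a ∂μ = ∫ a, (ρ a - 1) * (u a - m) ∂μ := calc
    _ = (∫ a, ρ a * u a ∂μ - ∫ a, u a ∂μ) - m * (∫ a, ρ a ∂μ - ∫ _, (1 : ℝ) ∂μ) := by
        simp [hρ₁]
    _ = ∫ a, ((ρ a * u a - u a) - m * (ρ a - 1)) ∂μ := by
        rw [integral_sub hρu_sub (hρ_sub.const_mul m), integral_sub hρu hu_int,
          integral_const_mul, integral_sub hρ (integrable_const 1)]
    _ = ∫ a, (ρ a - 1) * (u a - m) ∂μ := by congr 1; funext a; ring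
  rw [hcenter, ← integral_const_mul]
  refine integral_mono (hρ_sub.mul_bdd (hu.sub_const m).aestronglyMeasurable (.of_forall hu_sub))
    (hρ_sub.abs.const_mul r) fun a => ?_
  calc (ρ a - 1) * (u a - m) ≤ |ρ a - 1| * |u a - m| := by rw [← abs_mul]; exact le_abs_self _
    _ ≤ r * |ρ a - 1| := by rw [mul_comm]; gcongr; exact hm a

lemma integral_tilted_sub_integral_le [IsProbabilityMeasure μ] (hb : Measurable b)
    (hd : ∀ a a', b a - b a' ≤ 2 * d) (hu : Measurable u) (hK : ∀ a a', u a - u a' ≤ K) :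
    ∫ a, u a ∂(μ.tilted b) - ∫ a, u a ∂μ ≤ K * (1 - exp (-d)) := by
  have := nonempty_of_isProbabilityMeasure μ
  obtain ⟨m, hm⟩ := exists_abs_sub_le_of_forall_sub_le (h := u) (r := K / 2)
    (by simpa only [mul_div_cancel₀ K two_ne_zero] using hK)
  have hb_int := integrable_exp_of_forall_sub_le (μ := μ) hb hd
  have hK₀ : 0 ≤ K / 2 := (abs_nonneg _).trans (hm (Classical.arbitrary α))
  rw [integral_tilted]
  simp only [smul_eq_mul]
  calc _ ≤ K / 2 * ∫ a, |exp (b a) / (∫ a', exp (b a') ∂μ) - 1| ∂μ :=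
        integral_mul_sub_integral_le (hb_int.div_const _)
          (by rw [integral_div, div_self (integral_exp_pos hb_int).ne']) hu hm
    _ ≤ K / 2 * (2 * (1 - exp (-d))) := by gcongr; exact integral_abs_exp_div_sub_one_le hb hd
    _ = K * (1 - exp (-d)) := by ring

lemma cgf_tilted_sub_cgf_le [IsProbabilityMeasure μ] (hb : Measurable b)
    (hd : ∀ a a', b a - b a' ≤ 2 * d) (hu : Measurable u) (hK : ∀ a a', u a - u a' ≤ K) :
    cgf u (μ.tilted b) 1 - cgf u μ 1 ≤ K * (1 - exp (-d)) := by
  have := nonempty_of_isProbabilityMeasure μ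
  obtain ⟨m, hm⟩ := exists_abs_sub_le_of_forall_sub_le (h := u) (r := K / 2)
    (by simpa only [mul_div_cancel₀ K two_ne_zero] using hK)
  have hb_int : Integrable (fun a => exp (b a)) μ := integrable_exp_of_forall_sub_le hb hd
  have hexp_int : ∀ (ρ : Measure α) [IsFiniteMeasure ρ] (t : ℝ),
      Integrable (fun a => exp (t * u a)) ρ := fun ρ _ t =>
    integrable_exp_of_abs_sub_le (m := t * m) (hu.const_mul t) fun a => by
      rw [← mul_sub, abs_mul]; exact mul_le_mul_of_nonneg_left (hm a) (abs_nonneg t)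
  have hinterior : ∀ (ρ : Measure α) [IsFiniteMeasure ρ] (t : ℝ),
      t ∈ interior (integrableExpSet u ρ) := fun ρ _ t => by
    rw [show integrableExpSet u ρ = univ from eq_univ_of_forall (hexp_int ρ), interior_univ]
    trivial
  have := isProbabilityMeasure_tilted hb_int
  set F := fun t => cgf u (μ.tilted b) t - cgf u μ t
  have hF : Differentiable ℝ F := fun t =>
    (analyticAt_cgf (hinterior _ t)).differentiableAt.sub
      (analyticAt_cgf (hinterior _ t)).differentiableAt
  have hF' : ∀ t, deriv F t ≤ K * (1 - exp (-d)) := fun t => by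
    have := isProbabilityMeasure_tilted (hexp_int μ t)
    rw [deriv_fun_sub (analyticAt_cgf (hinterior _ t)).differentiableAt
        (analyticAt_cgf (hinterior _ t)).differentiableAt,
      ← integral_tilted_mul_self (hinterior _ t), ← integral_tilted_mul_self (hinterior _ t),
      tilted_comm hb_int (hexp_int μ t)]
    exact integral_tilted_sub_integral_le hb hd hu hK
  simpa [F, cgf_zero] using image_sub_le_mul_sub_of_deriv_le hF hF' zero_le_one

lemma log_integral_exp_add_sub_sub_le (ν νt : Measure α) [IsProbabilityMeasure ν]
    [IsProbabilityMeasure νt] {φ φ' : α → ℝ} (hφ : Measurable φ) (hφ' : Measurable φ')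
    (hu : Measurable u) (hφ_osc : ∀ a a', φ a - φ a' ≤ 2 * d)
    (hφ'_osc : ∀ a a', φ' a - φ' a' ≤ 2 * d)
    (hshift_osc : ∀ a a', (φ' - φ) a - (φ' - φ) a' ≤ 2 * d) (hK : ∀ a a', u a - u a' ≤ K) :
    (log (∫ a, exp (φ' a + u a) ∂ν) - log (∫ a, exp (φ' a) ∂νt))
      - (log (∫ a, exp (φ a + u a) ∂ν) - log (∫ a, exp (φ a) ∂νt))
      ≤ K * (1 - exp (-d)) + (exp (2 * d) - 1) * tvDist ν νt := by
  have := nonempty_of_isProbabilityMeasure ν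
  have hint : ∀ {ψ : α → ℝ}, Measurable ψ → (∀ a a', ψ a - ψ a' ≤ 2 * d) →
      Integrable (fun a => exp (ψ a)) ν ∧ Integrable (fun a => exp (ψ a + u a)) ν :=
    fun hψ hψ_osc => ⟨integrable_exp_of_forall_sub_le hψ hψ_osc,
      integrable_exp_of_forall_sub_le (K := 2 * d + K) (hψ.add hu) fun a a' => by
        linarith [hψ_osc a a', hK a a']⟩
  obtain ⟨hφ_int, hφu_int⟩ := hint hφ hφ_osc
  obtain ⟨hφ'_int, hφ'u_int⟩ := hint hφ' hφ'_osc
  rw [log_integral_exp_add_eq hφ_int hφu_int, log_integral_exp_add_eq hφ'_int hφ'u_int]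
  have := isProbabilityMeasure_tilted hφ_int
  have hcontract := cgf_tilted_sub_cgf_le (μ := ν.tilted φ) (hφ'.sub hφ) hshift_osc hu hK
  rw [tilted_tilted hφ_int, add_sub_cancel] at hcontract
  have hstab := abs_le.1 (abs_log_integral_exp_sub_le (μ := ν) (ν := νt) hφ hφ_osc)
  have hstab' := abs_le.1 (abs_log_integral_exp_sub_le (μ := ν) (ν := νt) hφ' hφ'_osc)
  linarith [hstab.1, hstab'.2]

end Contraction

section Potentials

variable {X Y : Type*} [MeasurableSpace X] [MeasurableSpace Y] {c : X → Y → ℝ} {Mc ε Dc : ℝ}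

lemma sub_cost_sub_le_of_eq_softCTransform (μ : Measure X) [IsProbabilityMeasure μ]
    (hc : Measurable (Function.uncurry c)) (hc_bdd : ∀ x y, |c x y| ≤ Mc) (hε : 0 < ε)
    (hDc : ∀ x x' y y', c x y + c x' y' - c x y' - c x' y ≤ 2 * Dc)
    {f : X → ℝ} {g : Y → ℝ} (hf : Measurable f) {Mf : ℝ} (hf_bdd : ∀ x, |f x| ≤ Mf)
    (hg : ∀ y, g y = -ε * log (∫ x, exp ((f x - c x y) / ε) ∂μ)) (x : X) (y y' : Y) :
    (g y - c x y) - (g y' - c x y') ≤ 2 * Dc := by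
  have hint : ∀ z, Integrable (fun x' => exp ((f x' - c x' z) / ε)) μ := fun z =>
    integrable_exp_of_abs_sub_le (m := 0) (d := (Mf + Mc) / ε)
      ((hf.sub (hc.comp measurable_prodMk_right)).div_const ε)
      fun x' => by
        rw [sub_zero, abs_div, abs_of_pos hε]
        gcongr
        exact (abs_sub _ _).trans (add_le_add (hf_bdd x') (hc_bdd x' z))
  have hlog := log_integral_exp_le_add (k := (2 * Dc + c x y - c x y') / ε) (hint y') (hint y)
    fun x' => by
      rw [← add_div]
      gcongr
      linarith [hDc x' x y y']
  have hεlog := mul_le_mul_of_nonneg_left hlog hε.le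
  rw [mul_add, mul_div_cancel₀ _ hε.ne'] at hεlog
  rw [hg y, hg y']
  linarith

lemma oscVar_sub_le_of_eq_softCTransform (ν νt : Measure Y) [IsProbabilityMeasure ν]
    [IsProbabilityMeasure νt] (μt : Measure X) [IsProbabilityMeasure μt]
    (hc : Measurable (Function.uncurry c)) (hc_bdd : ∀ x y, |c x y| ≤ Mc) (hε : 0 < ε)
    (hDc : ∀ x x' y y', c x y + c x' y' - c x y' - c x' y ≤ 2 * Dc)
    {f ft : X → ℝ} {g gt : Y → ℝ} (hft_meas : Measurable ft) (hg_meas : Measurable g)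
    (hgt_meas : Measurable gt) {Mf Mg : ℝ} (hft_bdd : ∀ x, |ft x| ≤ Mf)
    (hg_bdd : ∀ y, |g y| ≤ Mg) (hgt_bdd : ∀ y, |gt y| ≤ Mg)
    (hf : ∀ x, f x = -ε * log (∫ y, exp ((g y - c x y) / ε) ∂ν))
    (hft : ∀ x, ft x = -ε * log (∫ y, exp ((gt y - c x y) / ε) ∂νt))
    (hgt : ∀ y, gt y = -ε * log (∫ x, exp ((ft x - c x y) / ε) ∂μt)) :
    oscVar (fun x => f x - ft x) ≤ (1 - exp (-(Dc / ε))) * oscVar (fun y => g y - gt y)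
      + ε * (exp (2 * (Dc / ε)) - 1) * tvDist ν νt := by
  have := nonempty_of_isProbabilityMeasure μt
  set d := Dc / ε
  set K := oscVar (fun y => g y - gt y)
  set a : X → Y → ℝ := fun x y => (gt y - c x y) / ε
  set u : Y → ℝ := fun y => (g y - gt y) / ε
  have ha : ∀ x, Measurable (a x) := fun x =>
    (hgt_meas.sub (hc.comp measurable_prodMk_left)).div_const ε
  have hu : Measurable u := (hg_meas.sub hgt_meas).div_const ε
  have hu_osc : ∀ y y', u y - u y' ≤ K / ε := fun y y' => by
    rw [← sub_div]
    gcongr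
    exact sub_le_oscVar (fun y => (abs_sub _ _).trans (add_le_add (hg_bdd y) (hgt_bdd y))) y y'
  have ha_osc : ∀ x y y', a x y - a x y' ≤ 2 * d := fun x y y' => by
    rw [← sub_div, ← mul_div_assoc]
    gcongr
    exact sub_cost_sub_le_of_eq_softCTransform μt hc hc_bdd hε hDc hft_meas hft_bdd hgt x y y'
  have hshift_osc : ∀ x x' y y', (a x' - a x) y - (a x' - a x) y' ≤ 2 * d := fun x x' y y' => by
    have hcost : (a x' - a x) y - (a x' - a x) y' = (c x y + c x' y' - c x y' - c x' y) / ε := by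
      simp only [Pi.sub_apply, a]
      ring
    rw [hcost, ← mul_div_assoc]
    gcongr
    exact hDc x x' y y'
  have hf' : ∀ x, f x = -ε * log (∫ y, exp (a x y + u y) ∂ν) := fun x => by
    rw [hf x]
    congr 4 with y
    simp only [a, u]
    congr 1
    ring
  have hft' : ∀ x, ft x = -ε * log (∫ y, exp (a x y) ∂νt) := hft
  refine oscVar_le_of_forall_sub_le fun x x' => ?_
  have hincr := log_integral_exp_add_sub_sub_le ν νt (ha x) (ha x') hu (ha_osc x) (ha_osc x')
    (hshift_osc x x') hu_osc
  calc f x - ft x - (f x' - ft x')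
      = ε * ((log (∫ y, exp (a x' y + u y) ∂ν) - log (∫ y, exp (a x' y) ∂νt))
          - (log (∫ y, exp (a x y + u y) ∂ν) - log (∫ y, exp (a x y) ∂νt))) := by
        rw [hf' x, hf' x', hft' x, hft' x']; ring
    _ ≤ ε * (K / ε * (1 - exp (-d)) + (exp (2 * d) - 1) * tvDist ν νt) := by gcongr
    _ = (1 - exp (-d)) * K + ε * (exp (2 * d) - 1) * tvDist ν νt := by field_simp

end Potentials

lemma add_le_div_of_le_one_sub_mul_add {A B s t κ : ℝ} (hκ : 0 < κ) (hA : A ≤ (1 - κ) * B + s)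
    (hB : B ≤ (1 - κ) * A + t) : A + B ≤ (s + t) / κ := by
  rw [le_div_iff₀ hκ]
  linarith

theorem entropic_potentials_stability_general
    {X Y : Type*} [MeasurableSpace X] [MeasurableSpace Y]
    (μ μt : Measure X) [IsProbabilityMeasure μ] [IsProbabilityMeasure μt]
    (ν νt : Measure Y) [IsProbabilityMeasure ν] [IsProbabilityMeasure νt]
    (c : X → Y → ℝ) (hc_meas : Measurable (Function.uncurry c))
    (Mc : ℝ) (hc_bdd : ∀ x y, |c x y| ≤ Mc)
    (ε : ℝ) (hε : 0 < ε)
    (Dc : ℝ)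
    (hDc : ∀ x x' y y', c x y + c x' y' - c x y' - c x' y ≤ 2 * Dc)
    (f ft : X → ℝ) (g gt : Y → ℝ)
    (hf_meas : Measurable f) (hft_meas : Measurable ft)
    (hg_meas : Measurable g) (hgt_meas : Measurable gt)
    (Mf : ℝ) (hf_bdd : ∀ x, |f x| ≤ Mf) (hft_bdd : ∀ x, |ft x| ≤ Mf)
    (Mg : ℝ) (hg_bdd : ∀ y, |g y| ≤ Mg) (hgt_bdd : ∀ y, |gt y| ≤ Mg)
    (hg : ∀ y, g y = -ε * log (∫ x, exp ((f x - c x y) / ε) ∂μ))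
    (hf : ∀ x, f x = -ε * log (∫ y, exp ((g y - c x y) / ε) ∂ν))
    (hgt : ∀ y, gt y = -ε * log (∫ x, exp ((ft x - c x y) / ε) ∂μt))
    (hft : ∀ x, ft x = -ε * log (∫ y, exp ((gt y - c x y) / ε) ∂νt)) :
    oscVar (fun x => f x - ft x) + oscVar (fun y => g y - gt y)
      ≤ 2 * ε * exp (3 * Dc / ε) * (tvDist μ μt + tvDist ν νt) := by
  have hX := oscVar_sub_le_of_eq_softCTransform ν νt μt hc_meas hc_bdd hε hDc hft_meas hg_meas
    hgt_meas hft_bdd hg_bdd hgt_bdd hf hft hgt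
  have hY := oscVar_sub_le_of_eq_softCTransform μ μt νt (c := fun y x => c x y) (Dc := Dc)
    (hc_meas.comp measurable_swap) (fun y x => hc_bdd x y) hε
    (fun y y' x x' => by linarith [hDc x x' y y']) hgt_meas hf_meas hft_meas
    hgt_bdd hf_bdd hft_bdd hg hgt hft
  have hexp : exp (3 * Dc / ε) = exp (2 * (Dc / ε)) * exp (Dc / ε) := by rw [← exp_add]; ring_nf
  have hT : 0 ≤ tvDist μ μt + tvDist ν νt := add_nonneg tvDist_nonneg tvDist_nonneg
  calc oscVar (fun x => f x - ft x) + oscVar (fun y => g y - gt y)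
      ≤ (ε * (exp (2 * (Dc / ε)) - 1) * tvDist ν νt + ε * (exp (2 * (Dc / ε)) - 1) * tvDist μ μt)
          / exp (-(Dc / ε)) := add_le_div_of_le_one_sub_mul_add (exp_pos _) hX hY
    _ = ε * (exp (3 * Dc / ε) - exp (Dc / ε)) * (tvDist μ μt + tvDist ν νt) := by
        rw [exp_neg, div_inv_eq_mul, hexp]; ring
    _ ≤ 2 * ε * exp (3 * Dc / ε) * (tvDist μ μt + tvDist ν νt) := by
        refine mul_le_mul_of_nonneg_right ?_ hT
        nlinarith [exp_pos (Dc / ε), exp_pos (3 * Dc / ε)]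

/-- Quantitative stability of entropic potentials: if the bounded measurable
potentials `(f, g)` and `(ft, gt)` satisfy the Schrödinger fixed-point equations
`g = T_μ(f)`, `f = T_ν(g)`, `gt = T_μt(ft)`, `ft = T_νt(gt)` for the bounded cost `c`
with twist constant `Dc`, then
`‖f − ft‖_var + ‖g − gt‖_var ≤ 2ε·e^{3Dc/ε}·(‖μ − μt‖_TV + ‖ν − νt‖_TV)`. -/
theorem entropic_potentials_stability
    {X Y : Type*} [MeasurableSpace X] [MeasurableSpace Y] [Nonempty X] [Nonempty Y]
    (μ μt : Measure X) [IsProbabilityMeasure μ] [IsProbabilityMeasure μt]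
    (ν νt : Measure Y) [IsProbabilityMeasure ν] [IsProbabilityMeasure νt]
    (c : X → Y → ℝ) (hc_meas : Measurable (Function.uncurry c))
    (Mc : ℝ) (hc_bdd : ∀ x y, |c x y| ≤ Mc)
    (ε : ℝ) (hε : 0 < ε)
    (Dc : ℝ)
    (hDc : ∀ x x' y y', c x y + c x' y' - c x y' - c x' y ≤ 2 * Dc)
    (f ft : X → ℝ) (g gt : Y → ℝ)
    (hf_meas : Measurable f) (hft_meas : Measurable ft)
    (hg_meas : Measurable g) (hgt_meas : Measurable gt)
    (Mf : ℝ) (hf_bdd : ∀ x, |f x| ≤ Mf) (hft_bdd : ∀ x, |ft x| ≤ Mf)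
    (Mg : ℝ) (hg_bdd : ∀ y, |g y| ≤ Mg) (hgt_bdd : ∀ y, |gt y| ≤ Mg)
    (hg : ∀ y, g y = -ε * log (∫ x, exp ((f x - c x y) / ε) ∂μ))
    (hf : ∀ x, f x = -ε * log (∫ y, exp ((g y - c x y) / ε) ∂ν))
    (hgt : ∀ y, gt y = -ε * log (∫ x, exp ((ft x - c x y) / ε) ∂μt))
    (hft : ∀ x, ft x = -ε * log (∫ y, exp ((gt y - c x y) / ε) ∂νt)) :
    oscVar (fun x => f x - ft x) + oscVar (fun y => g y - gt y)
      ≤ 2 * ε * exp (3 * Dc / ε) * (tvDist μ μt + tvDist ν νt) :=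
  entropic_potentials_stability_general μ μt ν νt c hc_meas Mc hc_bdd ε hε Dc hDc f ft g gt hf_meas
    hft_meas hg_meas hgt_meas Mf hf_bdd hft_bdd Mg hg_bdd hgt_bdd hg hf hgt hft
end
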